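/- arXiv:2603.14540 — 5 statements merged into one kernel-verified Lean document; each statement's English description precedes it below -/
import Mathlib

section
/- Let X = ℤ ∪ {∞} be the one-point compactification of ℤ. The function d given by d(n,m) = |n−m| / ((1+|n|)(1+|m|)) for n,m ∈ ℤ and d(n,∞) = 1/(1+|n|) defines a metric on X inducing the one-point compactification topology, and the sets Vₙ = (ℤ \ {−n,…,n}) ∪ {∞} satisfy diam(Vₙ) = (2n+2)/(n+2)² → 0 as n → ∞. -/
open OnePoint Filter

/-- The candidate metric on `ℤ ∪ {∞}`. -/
noncomputable def dZ : OnePoint ℤ → OnePoint ℤ → ℝ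
  | Option.some n, Option.some m => |(n : ℝ) - (m : ℝ)| / ((1 + |(n : ℝ)|) * (1 + |(m : ℝ)|))
  | Option.some n, Option.none => 1 / (1 + |(n : ℝ)|)
  | Option.none, Option.some m => 1 / (1 + |(m : ℝ)|)
  | Option.none, Option.none => 0

/-- The clopen neighbourhoods `Vₙ = (ℤ \ {-n,…,n}) ∪ {∞}` of `∞`. -/
def V (n : ℕ) : Set (OnePoint ℤ) :=
  {∞} ∪ (fun j : ℤ => (j : OnePoint ℤ)) '' {j : ℤ | (n : ℤ) < |j|}

namespace StmtAux

lemma A_pos (m : ℤ) : (0:ℝ) < 1 + |(m : ℝ)| := by positivity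

lemma key1 (n m k : ℝ) :
    |n - m| * (1 + |k|) ≤ |n - k| * (1 + |m|) + |k - m| * (1 + |n|) := by
  have h1 : |n - m| ≤ |n - k| + |k - m| := abs_sub_le n k m
  have h2 : |(n - m) * k| ≤ |n| * |k - m| + |m| * |n - k| := by
    calc |(n - m) * k| = |n * (k - m) + m * (n - k)| := by ring_nf
      _ ≤ |n * (k - m)| + |m * (n - k)| := abs_add_le _ _
      _ = |n| * |k - m| + |m| * |n - k| := by rw [abs_mul, abs_mul]
  rw [abs_mul] at h2
  nlinarith [abs_nonneg (n - m), abs_nonneg (n - k), abs_nonneg (k - m)]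

lemma dZ_self (x : OnePoint ℤ) : dZ x x = 0 := by
  cases x with
  | infty => rfl
  | coe n => show |(n:ℝ) - n| / _ = 0; simp

lemma dZ_comm (x y : OnePoint ℤ) : dZ x y = dZ y x := by
  cases x <;> cases y <;> simp [dZ, abs_sub_comm, mul_comm]

lemma dZ_triangle (x y z : OnePoint ℤ) : dZ x z ≤ dZ x y + dZ y z := by
  cases x with
  | infty =>
    cases y with
    | infty =>
      cases z <;> simp [dZ]
    | coe m =>
      cases z with
      | infty =>
        show (0:ℝ) ≤ 1 / (1 + |(m:ℝ)|) + 1 / (1 + |(m:ℝ)|)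
        positivity
      | coe k =>
        show 1 / (1 + |(k:ℝ)|) ≤ 1 / (1 + |(m:ℝ)|) + |(m:ℝ) - k| / ((1 + |(m:ℝ)|) * (1 + |(k:ℝ)|))
        rw [div_add_div _ _ (A_pos m).ne' (mul_pos (A_pos m) (A_pos k)).ne',
          div_le_div_iff₀ (A_pos k) (mul_pos (A_pos m) (mul_pos (A_pos m) (A_pos k)))]
        have h : |(m:ℝ)| - |(k:ℝ)| ≤ |(m:ℝ) - k| := abs_sub_abs_le_abs_sub _ _
        nlinarith [mul_le_mul_of_nonneg_right h
            (by positivity : (0:ℝ) ≤ (1 + |(m:ℝ)|) * (1 + |(k:ℝ)|)),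
          abs_nonneg ((m:ℝ) - k), A_pos m, A_pos k, abs_nonneg (m:ℝ), abs_nonneg (k:ℝ)]
  | coe n =>
    cases y with
    | infty =>
      cases z with
      | infty =>
        show 1 / (1 + |(n:ℝ)|) ≤ 1 / (1 + |(n:ℝ)|) + 0
        simp
      | coe k =>
        show |(n:ℝ) - k| / ((1 + |(n:ℝ)|) * (1 + |(k:ℝ)|)) ≤ 1 / (1 + |(n:ℝ)|) + 1 / (1 + |(k:ℝ)|)
        rw [div_add_div _ _ (A_pos n).ne' (A_pos k).ne',
          div_le_div_iff₀ (by positivity) (by positivity)]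
        have h : |(n:ℝ) - k| ≤ |(n:ℝ)| + |(k:ℝ)| := by
          simpa [sub_eq_add_neg] using abs_add_le (n:ℝ) (-(k:ℝ))
        nlinarith [mul_le_mul_of_nonneg_right h
            (by positivity : (0:ℝ) ≤ (1 + |(n:ℝ)|) * (1 + |(k:ℝ)|)),
          abs_nonneg ((n:ℝ) - k), A_pos n, A_pos k, abs_nonneg (n:ℝ), abs_nonneg (k:ℝ)]
    | coe m =>
      cases z with
      | infty =>
        show 1 / (1 + |(n:ℝ)|) ≤ |(n:ℝ) - m| / ((1 + |(n:ℝ)|) * (1 + |(m:ℝ)|)) + 1 / (1 + |(m:ℝ)|)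
        rw [div_add_div _ _ (mul_pos (A_pos n) (A_pos m)).ne' (A_pos m).ne',
          div_le_div_iff₀ (A_pos n) (by positivity)]
        have h : |(m:ℝ)| - |(n:ℝ)| ≤ |(n:ℝ) - m| := by
          rw [abs_sub_comm]; exact abs_sub_abs_le_abs_sub _ _
        nlinarith [mul_le_mul_of_nonneg_right h
            (by positivity : (0:ℝ) ≤ (1 + |(n:ℝ)|) * (1 + |(m:ℝ)|)),
          abs_nonneg ((n:ℝ) - m), A_pos n, A_pos m, abs_nonneg (n:ℝ), abs_nonneg (m:ℝ)]
      | coe k =>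
        show |(n:ℝ) - k| / ((1 + |(n:ℝ)|) * (1 + |(k:ℝ)|)) ≤
          |(n:ℝ) - m| / ((1 + |(n:ℝ)|) * (1 + |(m:ℝ)|)) +
            |(m:ℝ) - k| / ((1 + |(m:ℝ)|) * (1 + |(k:ℝ)|))
        rw [div_add_div _ _ (mul_pos (A_pos n) (A_pos m)).ne'
            (mul_pos (A_pos m) (A_pos k)).ne',
          div_le_div_iff₀ (by positivity) (by positivity)]
        have h := key1 (n:ℝ) (k:ℝ) (m:ℝ)
        nlinarith [mul_le_mul_of_nonneg_right h
            (by positivity : (0:ℝ) ≤ (1 + |(n:ℝ)|) * (1 + |(m:ℝ)|) * (1 + |(k:ℝ)|)),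
          A_pos n, A_pos m, A_pos k, abs_nonneg ((n:ℝ) - k), abs_nonneg ((n:ℝ) - m),
          abs_nonneg ((m:ℝ) - k), abs_nonneg (n:ℝ), abs_nonneg (m:ℝ), abs_nonneg (k:ℝ)]

lemma dZ_eq_zero {x y : OnePoint ℤ} (h : dZ x y = 0) : x = y := by
  cases x with
  | infty =>
    cases y with
    | infty => rfl
    | coe m =>
      exfalso
      have h' : (1:ℝ) / (1 + |(m:ℝ)|) = 0 := h
      rw [div_eq_zero_iff] at h'
      rcases h' with h' | h'
      · exact one_ne_zero h'
      · exact (A_pos m).ne' h'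
  | coe n =>
    cases y with
    | infty =>
      exfalso
      have h' : (1:ℝ) / (1 + |(n:ℝ)|) = 0 := h
      rw [div_eq_zero_iff] at h'
      rcases h' with h' | h'
      · exact one_ne_zero h'
      · exact (A_pos n).ne' h'
    | coe m =>
      have h' : |(n:ℝ) - m| / ((1 + |(n:ℝ)|) * (1 + |(m:ℝ)|)) = 0 := h
      rw [div_eq_zero_iff] at h'
      rcases h' with h' | h'
      · have hnm : (n:ℝ) = m := by
          have := abs_eq_zero.mp h'
          linarith
        have : n = m := by exact_mod_cast hnm
        rw [this]
      · exact absurd h' (by positivity)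

/-- lower bound: any point distinct from `n` is at distance at least
`1/((1+|n|)(2+|n|))` from `n`. -/
lemma dZ_lower (n : ℤ) (y : OnePoint ℤ) (h : y ≠ (n : OnePoint ℤ)) :
    1 / ((1 + |(n:ℝ)|) * (2 + |(n:ℝ)|)) ≤ dZ (n : OnePoint ℤ) y := by
  cases y with
  | infty =>
    show _ ≤ 1 / (1 + |(n:ℝ)|)
    rw [div_le_div_iff₀ (by positivity) (A_pos n)]
    nlinarith [abs_nonneg (n:ℝ)]
  | coe m =>
    have hnm : n ≠ m := by
      rintro rfl; exact h rfl
    have h1 : (1:ℝ) ≤ |(n:ℝ) - m| := by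
      have h0 : (1:ℤ) ≤ |n - m| := Int.one_le_abs (sub_ne_zero.mpr hnm)
      exact_mod_cast h0
    have h2 : |(m:ℝ)| - |(n:ℝ)| ≤ |(n:ℝ) - m| := by
      rw [abs_sub_comm]; exact abs_sub_abs_le_abs_sub _ _
    show _ ≤ |(n:ℝ) - m| / ((1 + |(n:ℝ)|) * (1 + |(m:ℝ)|))
    rw [div_le_div_iff₀ (by positivity) (by positivity)]
    have step : |(m:ℝ)| ≤ |(n:ℝ) - m| * (1 + |(n:ℝ)|) := by
      nlinarith [mul_le_mul_of_nonneg_left h1 (abs_nonneg (n:ℝ))]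
    nlinarith [mul_le_mul_of_nonneg_right step (by positivity : (0:ℝ) ≤ 1 + |(n:ℝ)|),
      mul_le_mul_of_nonneg_right h1 (by positivity : (0:ℝ) ≤ 1 + |(n:ℝ)|),
      abs_nonneg (n:ℝ), abs_nonneg (m:ℝ)]

lemma topology_ok :
    ∀ s : Set (OnePoint ℤ), IsOpen s ↔ ∀ x ∈ s, ∃ ε > 0, ∀ y, dZ x y < ε → y ∈ s := by
  intro s
  rw [OnePoint.isOpen_def]
  constructor
  · rintro ⟨hcpt, -⟩ x hx
    cases x with
    | infty =>
      have hfin : (((↑) : ℤ → OnePoint ℤ) ⁻¹' s)ᶜ.Finite :=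
        isCompact_iff_finite.mp (hcpt hx)
      obtain ⟨N, hN⟩ : ∃ N : ℤ, ∀ m ∈ (((↑) : ℤ → OnePoint ℤ) ⁻¹' s)ᶜ, |m| ≤ N := by
        obtain ⟨N, hN⟩ := (hfin.image (fun m => |m|)).bddAbove
        exact ⟨N, fun m hm => hN ⟨m, hm, rfl⟩⟩
      have hN0 : (0:ℝ) ≤ max (N:ℝ) 0 := le_max_right _ _
      refine ⟨1 / (max (N:ℝ) 0 + 2), by positivity, fun y hy => ?_⟩
      cases y with
      | infty => exact hx
      | coe m =>
        by_contra hm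
        have hmem : m ∈ (((↑) : ℤ → OnePoint ℤ) ⁻¹' s)ᶜ := hm
        have hd : dZ (∞ : OnePoint ℤ) (m : OnePoint ℤ) = 1 / (1 + |(m:ℝ)|) := rfl
        rw [hd] at hy
        have h1 : (|m|:ℝ) ≤ max (N:ℝ) 0 := le_trans (by exact_mod_cast hN m hmem) (le_max_left _ _)
        rw [div_lt_div_iff₀ (A_pos m) (by positivity)] at hy
        have : |(m:ℝ)| = ((|m|:ℤ):ℝ) := by push_cast [Int.cast_abs]; ring
        nlinarith [abs_nonneg (m:ℝ)]
    | coe n =>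
      refine ⟨1 / ((1 + |(n:ℝ)|) * (2 + |(n:ℝ)|)), by positivity, fun y hy => ?_⟩
      by_contra hys
      rcases eq_or_ne y (n : OnePoint ℤ) with rfl | hne
      · exact hys hx
      · exact absurd hy (not_lt.mpr (dZ_lower n y hne))
  · intro H
    constructor
    · intro hinf
      obtain ⟨ε, hε, hball⟩ := H ∞ hinf
      rw [isCompact_iff_finite]
      have hsub : (((↑) : ℤ → OnePoint ℤ) ⁻¹' s)ᶜ ⊆
          Set.Icc (-⌈1/ε⌉) ⌈1/ε⌉ := by
        intro m hm
        have hms : (m : OnePoint ℤ) ∉ s := hm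
        have hd : ¬ dZ (∞ : OnePoint ℤ) (m : OnePoint ℤ) < ε := fun h => hms (hball _ h)
        have hd' : ε ≤ 1 / (1 + |(m:ℝ)|) := not_lt.mp hd
        have h1 : (1:ℝ) + |(m:ℝ)| ≤ 1/ε := by
          rw [le_div_iff₀ (A_pos m)] at hd'
          rw [le_div_iff₀ hε]
          nlinarith
        have h2 : |(m:ℝ)| ≤ (⌈1/ε⌉ : ℝ) := le_trans (by linarith) (Int.le_ceil _)
        have h3 : |m| ≤ ⌈1/ε⌉ := by exact_mod_cast h2
        rw [Set.mem_Icc]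
        exact abs_le.mp h3
      exact Set.Finite.subset (Set.finite_Icc _ _) hsub
    · exact isOpen_discrete _

/-- The metric space structure. -/
noncomputable def mZ : MetricSpace (OnePoint ℤ) :=
  MetricSpace.ofDistTopology dZ dZ_self dZ_comm dZ_triangle topology_ok
    (fun _ _ h => dZ_eq_zero h)

lemma V_bound (n : ℕ) : ∀ x ∈ V n, ∀ y ∈ V n,
    dZ x y ≤ (2 * (n : ℝ) + 2) / ((n : ℝ) + 2) ^ 2 := by
  have hub : ∀ m : ℤ, (n:ℤ) < |m| → (n:ℝ) + 2 ≤ 1 + |(m:ℝ)| := by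
    intro m hm
    have : (n:ℤ) + 1 ≤ |m| := hm
    have : ((n:ℝ) + 1) ≤ ((|m|:ℤ):ℝ) := by exact_mod_cast this
    have habs : ((|m|:ℤ):ℝ) = |(m:ℝ)| := by push_cast [Int.cast_abs]; ring
    linarith [habs ▸ this]
  have hC : (0:ℝ) ≤ (2 * (n : ℝ) + 2) / ((n : ℝ) + 2) ^ 2 := by positivity
  rintro x (rfl | ⟨m, hm, rfl⟩) y hy
  · rcases hy with rfl | ⟨k, hk, rfl⟩
    · simpa [dZ] using hC
    · have hk' := hub k hk
      show 1 / (1 + |(k:ℝ)|) ≤ _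
      rw [div_le_div_iff₀ (A_pos k) (by positivity)]
      nlinarith [abs_nonneg (k:ℝ), sq_nonneg ((n:ℝ)), Nat.cast_nonneg (α := ℝ) n,
        mul_le_mul_of_nonneg_left hk' (by positivity : (0:ℝ) ≤ 2 * (n:ℝ) + 2)]
  · rcases hy with rfl | ⟨k, hk, rfl⟩
    · have hm' := hub m hm
      show 1 / (1 + |(m:ℝ)|) ≤ _
      rw [div_le_div_iff₀ (A_pos m) (by positivity)]
      nlinarith [abs_nonneg (m:ℝ), sq_nonneg ((n:ℝ)), Nat.cast_nonneg (α := ℝ) n,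
        mul_le_mul_of_nonneg_left hm' (by positivity : (0:ℝ) ≤ 2 * (n:ℝ) + 2)]
    · have hm' := hub m hm
      have hk' := hub k hk
      have habs : |(m:ℝ) - k| ≤ |(m:ℝ)| + |(k:ℝ)| := by
        simpa [sub_eq_add_neg] using abs_add_le (m:ℝ) (-(k:ℝ))
      show |(m:ℝ) - k| / ((1 + |(m:ℝ)|) * (1 + |(k:ℝ)|)) ≤ _
      rw [div_le_div_iff₀ (by positivity) (by positivity)]
      have hn0 : (0:ℝ) ≤ (n:ℝ) := Nat.cast_nonneg n
      have e1 : (0:ℝ) ≤ (2 * ((n:ℝ) + 2) - 2) *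
          (((1 + |(m:ℝ)|) - ((n:ℝ) + 2)) * ((1 + |(k:ℝ)|) - ((n:ℝ) + 2))) :=
        mul_nonneg (by linarith) (mul_nonneg (by linarith) (by linarith))
      have e2 : (0:ℝ) ≤ (((1 + |(m:ℝ)|) - ((n:ℝ) + 2)) + ((1 + |(k:ℝ)|) - ((n:ℝ) + 2))) *
          (((n:ℝ) + 2) * (((n:ℝ) + 2) - 2)) :=
        mul_nonneg (by linarith) (mul_nonneg (by linarith) (by linarith))
      have hd2 : |(m:ℝ) - k| * ((n:ℝ) + 2) ^ 2 ≤
          ((1 + |(m:ℝ)|) + (1 + |(k:ℝ)|) - 2) * ((n:ℝ) + 2) ^ 2 :=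
        mul_le_mul_of_nonneg_right (by linarith) (sq_nonneg _)
      nlinarith [e1, e2, hd2]

lemma diam_V (n : ℕ) :
    @Metric.diam _ mZ.toPseudoMetricSpace (V n) = (2 * (n : ℝ) + 2) / ((n : ℝ) + 2) ^ 2 := by
  letI := mZ
  have hdist : ∀ x y : OnePoint ℤ, dist x y = dZ x y := fun _ _ => rfl
  have hbd : Bornology.IsBounded (V n) := by
    rw [Metric.isBounded_iff]
    exact ⟨_, fun x hx y hy => (hdist x y) ▸ V_bound n x hx y hy⟩
  apply le_antisymm
  · exact Metric.diam_le_of_forall_dist_le (by positivity)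
      (fun x hx y hy => (hdist x y) ▸ V_bound n x hx y hy)
  · have h1 : (((n:ℤ) + 1 : ℤ) : OnePoint ℤ) ∈ V n := by
      refine Or.inr ⟨(n:ℤ) + 1, ?_, rfl⟩
      show (n:ℤ) < |(n:ℤ) + 1|
      rw [abs_of_nonneg (by omega : (0:ℤ) ≤ (n:ℤ) + 1)]
      omega
    have h2 : ((-(((n:ℤ)) + 1) : ℤ) : OnePoint ℤ) ∈ V n := by
      refine Or.inr ⟨-((n:ℤ) + 1), ?_, rfl⟩
      simp only [Set.mem_setOf_eq, abs_neg]
      rw [abs_of_nonneg (by omega)]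
      omega
    have := Metric.dist_le_diam_of_mem hbd h1 h2
    rw [hdist] at this
    have hval : dZ (((n:ℤ) + 1 : ℤ) : OnePoint ℤ) ((-(((n:ℤ)) + 1) : ℤ) : OnePoint ℤ)
        = (2 * (n : ℝ) + 2) / ((n : ℝ) + 2) ^ 2 := by
      show |(((n:ℤ) + 1 : ℤ):ℝ) - ((-((n:ℤ) + 1) : ℤ):ℝ)| /
        ((1 + |(((n:ℤ) + 1 : ℤ):ℝ)|) * (1 + |((-((n:ℤ) + 1) : ℤ):ℝ)|)) = _
      push_cast
      rw [abs_neg, show ((n:ℝ) + 1 - -((n:ℝ) + 1)) = 2*(n:ℝ) + 2 by ring,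
        abs_of_nonneg (by positivity : (0:ℝ) ≤ (n:ℝ) + 1),
        abs_of_nonneg (by positivity : (0:ℝ) ≤ 2*(n:ℝ) + 2)]
      ring
    rw [hval] at this
    exact this

end StmtAux

theorem stmt11 :
    ∃ m : MetricSpace (OnePoint ℤ),
      (∀ x y, m.toPseudoMetricSpace.toDist.dist x y = dZ x y) ∧
      m.toPseudoMetricSpace.toUniformSpace.toTopologicalSpace =
        (inferInstance : TopologicalSpace (OnePoint ℤ)) ∧
      (∀ n : ℕ, @Metric.diam _ m.toPseudoMetricSpace (V n) =
        (2 * (n : ℝ) + 2) / ((n : ℝ) + 2) ^ 2) ∧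
      Tendsto (fun n : ℕ => @Metric.diam _ m.toPseudoMetricSpace (V n)) atTop (nhds 0) := by
  refine ⟨StmtAux.mZ, fun x y => rfl, rfl, StmtAux.diam_V, ?_⟩
  simp only [StmtAux.diam_V]
  have hbound : ∀ n : ℕ, (2 * (n : ℝ) + 2) / ((n : ℝ) + 2) ^ 2 ≤ 2 / ((n : ℝ) + 2) := by
    intro n
    rw [div_le_div_iff₀ (by positivity) (by positivity)]
    nlinarith [Nat.cast_nonneg (α := ℝ) n]
  have h2 : Tendsto (fun n : ℕ => 2 / ((n : ℝ) + 2)) atTop (nhds 0) :=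
    Tendsto.div_atTop tendsto_const_nhds
      (tendsto_atTop_add_const_right atTop 2 tendsto_natCast_atTop_atTop)
  exact squeeze_zero (fun n => by positivity) hbound h2
end

section
/- Let X be compact metrizable totally disconnected, h a homeomorphism, and (Pₙ) an h-refined sequence of partitions. Suppose Z'' ∈ P_{n+2}, Z' ∈ P_{n+1}, Z ∈ Pₙ with n even satisfy Z'' ⊆ Z' ⊆ Z. Then there exist unique Z'₁ ∈ P_{n+1} and Z₁ ∈ Pₙ with Z'' ⊆ h⁻¹(Z'₁) and Z'₁ ⊆ h(Z₁), and moreover Z₁ = Z. -/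
/-! Fix a point `x ∈ Z''`. For any admissible pair `(W₁, W₂)` we get `h x ∈ W₁`, and then
`x ∈ W₂` because `h` is injective. A block of a partition is determined by any one of its
points, so `W₁` is the block of `P (n + 1)` containing `h x` and `W₂` is the block of `P n`
containing `x`, which is `Z`. Existence is the `h⁻¹`- and then the `h`-refinement property. -/

def IsClopenPartition {X : Type*} [TopologicalSpace X] (P : Set (Set X)) : Prop :=
  P.Finite ∧ (∀ Z ∈ P, Z.Nonempty ∧ IsClopen Z) ∧
    P.PairwiseDisjoint id ∧ ⋃₀ P = Set.univ

def Refines {X : Type*} (Q P : Set (Set X)) : Prop :=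
  ∀ Z ∈ Q, ∃ W ∈ P, Z ⊆ W

theorem IsClopenPartition.eq_of_mem_of_mem {X : Type*} [TopologicalSpace X]
    {P : Set (Set X)} (hP : IsClopenPartition P) {A B : Set X} (hA : A ∈ P) (hB : B ∈ P)
    {x : X} (hxA : x ∈ A) (hxB : x ∈ B) : A = B :=
  hP.2.2.1.elim hA hB (Set.not_disjoint_iff.2 ⟨x, hxA, hxB⟩)

theorem Refines.exists_subset_of_image {X : Type*} {Q P : Set (Set X)}
    {F : Set X → Set X} (hQ : Refines Q (F '' P)) {Z : Set X} (hZ : Z ∈ Q) :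
    ∃ W ∈ P, Z ⊆ F W := by
  obtain ⟨_, ⟨W, hW, rfl⟩, hZW⟩ := hQ Z hZ
  exact ⟨W, hW, hZW⟩

theorem Set.subset_of_subset_preimage_of_subset_image {α β : Type*} {f : α → β}
    (hf : Function.Injective f) {S : Set α} {V : Set β} {W : Set α}
    (hSV : S ⊆ f ⁻¹' V) (hVW : V ⊆ f '' W) : S ⊆ W :=
  (hSV.trans (Set.preimage_mono hVW)).trans (Set.preimage_image_eq W hf).subset

theorem stmt15_general {X : Type*} [TopologicalSpace X]
    (h : X ≃ₜ X) (P : ℕ → Set (Set X))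
    (hpart : ∀ n, IsClopenPartition (P n))
    (href : ∀ n, Refines (P (n + 1)) (P n) ∧
      Refines (P (n + 1)) (Set.image (⇑h) '' P n) ∧
      Refines (P (n + 1)) (Set.image (⇑h.symm) '' P n))
    (n : ℕ) (Z'' Z' Z : Set X)
    (h2 : Z'' ∈ P (n + 2)) (h0 : Z ∈ P n)
    (hsub2 : Z'' ⊆ Z') (hsub1 : Z' ⊆ Z) :
    (∃! W : Set X × Set X, W.1 ∈ P (n + 1) ∧ W.2 ∈ P n ∧
      Z'' ⊆ ⇑h ⁻¹' W.1 ∧ W.1 ⊆ ⇑h '' W.2) ∧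
    ∀ W1 W2 : Set X, W1 ∈ P (n + 1) → W2 ∈ P n →
      Z'' ⊆ ⇑h ⁻¹' W1 → W1 ⊆ ⇑h '' W2 → W2 = Z := by
  obtain ⟨x, hx⟩ := ((hpart (n + 2)).2.1 Z'' h2).1
  have hW2_eq : ∀ W1 W2 : Set X, W1 ∈ P (n + 1) → W2 ∈ P n →
      Z'' ⊆ ⇑h ⁻¹' W1 → W1 ⊆ ⇑h '' W2 → W2 = Z := fun W1 W2 _ hW2 hZ''W1 hW1W2 =>
    (hpart n).eq_of_mem_of_mem hW2 h0
      (Set.subset_of_subset_preimage_of_subset_image h.injective hZ''W1 hW1W2 hx)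
      (hsub1 (hsub2 hx))
  have href_symm := (href (n + 1)).2.2
  rw [Homeomorph.image_symm] at href_symm
  obtain ⟨W1, hW1, hZ''W1⟩ := href_symm.exists_subset_of_image h2
  obtain ⟨W2, hW2, hW1W2⟩ := (href n).2.1.exists_subset_of_image hW1
  refine ⟨⟨(W1, W2), ⟨hW1, hW2, hZ''W1, hW1W2⟩, ?_⟩, hW2_eq⟩
  rintro ⟨A, B⟩ ⟨hA, hB, hZ''A, hAB⟩
  refine Prod.ext ((hpart (n + 1)).eq_of_mem_of_mem hA hW1 (hZ''A hx) (hZ''W1 hx)) ?_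
  exact (hW2_eq A B hA hB hZ''A hAB).trans (hW2_eq W1 W2 hW1 hW2 hZ''W1 hW1W2).symm

theorem stmt15 {X : Type*} [TopologicalSpace X] [CompactSpace X]
    [TopologicalSpace.MetrizableSpace X] [TotallyDisconnectedSpace X]
    (h : X ≃ₜ X) (P : ℕ → Set (Set X))
    (hpart : ∀ n, IsClopenPartition (P n))
    (href : ∀ n, Refines (P (n + 1)) (P n) ∧
      Refines (P (n + 1)) (Set.image (⇑h) '' P n) ∧
      Refines (P (n + 1)) (Set.image (⇑h.symm) '' P n))
    (n : ℕ) (hn : Even n) (Z'' Z' Z : Set X)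
    (h2 : Z'' ∈ P (n + 2)) (h1 : Z' ∈ P (n + 1)) (h0 : Z ∈ P n)
    (hsub2 : Z'' ⊆ Z') (hsub1 : Z' ⊆ Z) :
    (∃! W : Set X × Set X, W.1 ∈ P (n + 1) ∧ W.2 ∈ P n ∧
      Z'' ⊆ ⇑h ⁻¹' W.1 ∧ W.1 ⊆ ⇑h '' W.2) ∧
    ∀ W1 W2 : Set X, W1 ∈ P (n + 1) → W2 ∈ P n →
      Z'' ⊆ ⇑h ⁻¹' W1 → W1 ⊆ ⇑h '' W2 → W2 = Z :=
  stmt15_general h P hpart href n Z'' Z' Z h2 h0 hsub2 hsub1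
end

section
/- Let X be compact metrizable totally disconnected, h a homeomorphism, and (Pₙ) an h-refined sequence of partitions. Define the connectivity relation: Z₂ ∈ P_{m+2i} is connected to Z₁ ∈ Pₘ if there is a chain Z₂ = W_{m+2i} ⊆ W_{m+2i−1}' ⊆ ⋯ where at each step k, W_{k+1} is contained either in W_k or in h^{(−1)^k}(W_k) with W_k ∈ P_k, terminating at W_m = Z₁. Then Z₂ is connected to Z₁ if and only if Z₂ ⊆ h^j(Z₁) for some integer j with |j| ≤ i, if and only if Z₂ ∩ h^j(Z₁) ≠ ∅ for some |j| ≤ i. -/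
/-- `Chain h P k W l Z` : the block `W ∈ P k` is connected to the block `Z ∈ P l`
by a directed path of blue (inclusion) and red (`h^{(-1)^level}`-translate) edges
in the `h`-diagram. -/
inductive Chain {X : Type*} [TopologicalSpace X] (h : X ≃ₜ X) (P : ℕ → Set (Set X)) :
    ℕ → Set X → ℕ → Set X → Prop
  | refl (k : ℕ) (Z : Set X) (hZ : Z ∈ P k) : Chain h P k Z k Z
  | blue {k l : ℕ} {W W' Z : Set X} (hW' : W' ∈ P (k + 1)) (hsub : W' ⊆ W)
      (hc : Chain h P k W l Z) : Chain h P (k + 1) W' l Z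
  | red {k l : ℕ} {W W' Z : Set X} (hW' : W' ∈ P (k + 1))
      (hsub : W' ⊆ if Even k then ⇑h '' W else ⇑h.symm '' W)
      (hc : Chain h P k W l Z) : Chain h P (k + 1) W' l Z

/-!
A red edge leaving level `k` applies `h` when `k` is even and `h⁻¹` when `k` is odd, while a
blue edge applies nothing. Hence a path from level `k` down to level `l` lands inside `h^j` of
its target, where `j` ranges between minus the number of odd levels and the number of even
levels in `[l, k)`; from level `m + 2i` to level `m` this is exactly `|j| ≤ i`. Conversely,
given a point of `Z₂ ∩ h^j(Z₁)`, follow it down the levels: take the blue parent while `j` stays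
reachable from the level below, and otherwise the red parent, which moves the point by `h^∓1`
and `j` by `∓1`. At level `m` we get `j = 0`, and disjointness of `Pₘ` forces the block reached
to be `Z₁`.
-/

namespace Equiv.Perm

variable {α : Type*} (g : Equiv.Perm α)

lemma image_zpow_image (a b : ℤ) (Z : Set α) :
    ⇑(g ^ a) '' (⇑(g ^ b) '' Z) = ⇑(g ^ (a + b)) '' Z := by
  rw [← Set.image_comp, ← coe_mul, ← zpow_add]

lemma inter_image_zpow_nonempty_of_subset {W W' Z : Set α} {e j : ℤ}
    (hW' : W' ⊆ ⇑(g ^ e) '' W) (hne : (W' ∩ ⇑(g ^ j) '' Z).Nonempty) :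
    (W ∩ ⇑(g ^ (j - e)) '' Z).Nonempty := by
  obtain ⟨x, hxW', z, hz, rfl⟩ := hne
  obtain ⟨y, hy, hyx⟩ := hW' hxW'
  refine ⟨y, hy, z, hz, ?_⟩
  apply (g ^ e).injective
  rw [hyx, ← mul_apply, ← zpow_add, add_sub_cancel]

end Equiv.Perm

def redShift (k : ℕ) : ℤ := if Even k then 1 else -1

/-- `k / 2 - l / 2` and `(k + 1) / 2 - (l + 1) / 2` count the odd and the even levels
in `[l, k)`. -/
def AdmissibleShift (l k : ℕ) (j : ℤ) : Prop :=
  -((k : ℤ) / 2 - (l : ℤ) / 2) ≤ j ∧ j ≤ ((k : ℤ) + 1) / 2 - ((l : ℤ) + 1) / 2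

lemma admissibleShift_self_iff {l : ℕ} {j : ℤ} : AdmissibleShift l l j ↔ j = 0 := by
  unfold AdmissibleShift; omega

lemma admissibleShift_succ_iff {l k : ℕ} (hlk : l ≤ k) {j : ℤ} :
    AdmissibleShift l (k + 1) j ↔
      AdmissibleShift l k j ∨ AdmissibleShift l k (j - redShift k) := by
  unfold AdmissibleShift redShift
  rcases Nat.even_or_odd k with hk | hk
  · rw [if_pos hk]; rw [Nat.even_iff] at hk; push_cast; omega
  · rw [if_neg (Nat.not_even_iff_odd.mpr hk)]; rw [Nat.odd_iff] at hk; push_cast; omega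

lemma admissibleShift_add_two_mul_iff {m i : ℕ} {j : ℤ} :
    AdmissibleShift m (m + 2 * i) j ↔ |j| ≤ i := by
  unfold AdmissibleShift; rw [abs_le]; push_cast; omega

section Chain

variable {X : Type*} [TopologicalSpace X] (h : X ≃ₜ X) {P : ℕ → Set (Set X)}

lemma image_redShift (k : ℕ) (W : Set X) :
    (if Even k then ⇑h '' W else ⇑h.symm '' W) = ⇑(h.toEquiv ^ redShift k) '' W := by
  unfold redShift
  split_ifs
  · rw [zpow_one]; rfl
  · rw [zpow_neg_one]; rfl

lemma Chain.exists_admissibleShift_subset {k l : ℕ} {W Z : Set X} (hc : Chain h P k W l Z) :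
    l ≤ k ∧ ∃ j, AdmissibleShift l k j ∧ W ⊆ ⇑(h.toEquiv ^ j) '' Z := by
  induction hc with
  | refl k Z hZ => exact ⟨le_rfl, 0, admissibleShift_self_iff.mpr rfl, by simp⟩
  | @blue k l W W' Z hW' hsub _ ih =>
    obtain ⟨hlk, j, hj, hWZ⟩ := ih
    exact ⟨hlk.trans k.le_succ, j, (admissibleShift_succ_iff hlk).mpr (.inl hj),
      hsub.trans hWZ⟩
  | @red k l W W' Z hW' hsub _ ih =>
    obtain ⟨hlk, j, hj, hWZ⟩ := ih
    refine ⟨hlk.trans k.le_succ, redShift k + j,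
      (admissibleShift_succ_iff hlk).mpr (.inr (by rwa [add_sub_cancel_left])), ?_⟩
    rw [image_redShift] at hsub
    exact (hsub.trans (Set.image_mono hWZ)).trans_eq
      (Equiv.Perm.image_zpow_image h.toEquiv _ _ Z)

lemma exists_red_edge (hfwd : ∀ n, Refines (P (n + 1)) (Set.image (⇑h) '' P n))
    (hbwd : ∀ n, Refines (P (n + 1)) (Set.image (⇑h.symm) '' P n))
    {k : ℕ} {W' : Set X} (hW' : W' ∈ P (k + 1)) :
    ∃ W ∈ P k, W' ⊆ if Even k then ⇑h '' W else ⇑h.symm '' W := by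
  by_cases hk : Even k
  · obtain ⟨_, ⟨W, hW, rfl⟩, hsub⟩ := hfwd k W' hW'
    exact ⟨W, hW, by rwa [if_pos hk]⟩
  · obtain ⟨_, ⟨W, hW, rfl⟩, hsub⟩ := hbwd k W' hW'
    exact ⟨W, hW, by rwa [if_neg hk]⟩

lemma chain_of_inter_nonempty (hdisj : ∀ n, (P n).PairwiseDisjoint id)
    (hblue : ∀ n, Refines (P (n + 1)) (P n))
    (hfwd : ∀ n, Refines (P (n + 1)) (Set.image (⇑h) '' P n))
    (hbwd : ∀ n, Refines (P (n + 1)) (Set.image (⇑h.symm) '' P n))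
    {l k : ℕ} (hlk : l ≤ k) {Z : Set X} (hZ : Z ∈ P l) :
    ∀ {W : Set X} {j : ℤ}, W ∈ P k → AdmissibleShift l k j →
      (W ∩ ⇑(h.toEquiv ^ j) '' Z).Nonempty → Chain h P k W l Z := by
  induction k, hlk using Nat.le_induction with
  | base =>
    intro W j hW hj hne
    obtain ⟨x, hxW, hxZ⟩ := hne
    rw [admissibleShift_self_iff.mp hj, zpow_zero, Equiv.Perm.coe_one, Set.image_id] at hxZ
    obtain rfl : W = Z := (hdisj l).elim_set hW hZ x hxW hxZ
    exact .refl l W hW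
  | succ k hlk ih =>
    intro W' j hW' hj hne
    rcases (admissibleShift_succ_iff hlk).mp hj with hj | hj
    · obtain ⟨W, hW, hsub⟩ := hblue k W' hW'
      exact .blue hW' hsub (ih hW hj (hne.mono (Set.inter_subset_inter_left _ hsub)))
    · obtain ⟨W, hW, hsub⟩ := exists_red_edge h hfwd hbwd hW'
      refine .red hW' hsub (ih hW hj ?_)
      rw [image_redShift] at hsub
      exact Equiv.Perm.inter_image_zpow_nonempty_of_subset h.toEquiv hsub hne

end Chain

theorem stmt16_general {X : Type*} [TopologicalSpace X]
    (h : X ≃ₜ X) (P : ℕ → Set (Set X))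
    (hpart : ∀ n, IsClopenPartition (P n))
    (href : ∀ n, Refines (P (n + 1)) (P n) ∧
      Refines (P (n + 1)) (Set.image (⇑h) '' P n) ∧
      Refines (P (n + 1)) (Set.image (⇑h.symm) '' P n))
    (m i : ℕ) (Z₂ Z₁ : Set X) (hZ₂ : Z₂ ∈ P (m + 2 * i)) (hZ₁ : Z₁ ∈ P m) :
    (Chain h P (m + 2 * i) Z₂ m Z₁ ↔
      ∃ j : ℤ, |j| ≤ (i : ℤ) ∧ Z₂ ⊆ ⇑(h.toEquiv ^ j) '' Z₁) ∧
    (Chain h P (m + 2 * i) Z₂ m Z₁ ↔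
      ∃ j : ℤ, |j| ≤ (i : ℤ) ∧ (Z₂ ∩ ⇑(h.toEquiv ^ j) '' Z₁).Nonempty) := by
  have chain_subset : Chain h P (m + 2 * i) Z₂ m Z₁ →
      ∃ j : ℤ, |j| ≤ (i : ℤ) ∧ Z₂ ⊆ ⇑(h.toEquiv ^ j) '' Z₁ := fun hc => by
    obtain ⟨-, j, hj, hsub⟩ := hc.exists_admissibleShift_subset
    exact ⟨j, admissibleShift_add_two_mul_iff.mp hj, hsub⟩
  have subset_inter : (∃ j : ℤ, |j| ≤ (i : ℤ) ∧ Z₂ ⊆ ⇑(h.toEquiv ^ j) '' Z₁) →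
      ∃ j : ℤ, |j| ≤ (i : ℤ) ∧ (Z₂ ∩ ⇑(h.toEquiv ^ j) '' Z₁).Nonempty := by
    rintro ⟨j, hj, hsub⟩
    obtain ⟨x, hx⟩ := ((hpart _).2.1 Z₂ hZ₂).1
    exact ⟨j, hj, x, hx, hsub hx⟩
  have inter_chain :
      (∃ j : ℤ, |j| ≤ (i : ℤ) ∧ (Z₂ ∩ ⇑(h.toEquiv ^ j) '' Z₁).Nonempty) →
      Chain h P (m + 2 * i) Z₂ m Z₁ := fun ⟨j, hj, hne⟩ =>
    chain_of_inter_nonempty h (fun n => (hpart n).2.2.1) (fun n => (href n).1)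
      (fun n => (href n).2.1) (fun n => (href n).2.2) (Nat.le_add_right m _) hZ₁ hZ₂
      (admissibleShift_add_two_mul_iff.mpr hj) hne
  exact ⟨⟨chain_subset, inter_chain ∘ subset_inter⟩,
    ⟨subset_inter ∘ chain_subset, inter_chain⟩⟩

theorem stmt16 {X : Type*} [TopologicalSpace X] [CompactSpace X]
    [TopologicalSpace.MetrizableSpace X] [TotallyDisconnectedSpace X]
    (h : X ≃ₜ X) (P : ℕ → Set (Set X))
    (hpart : ∀ n, IsClopenPartition (P n))
    (href : ∀ n, Refines (P (n + 1)) (P n) ∧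
      Refines (P (n + 1)) (Set.image (⇑h) '' P n) ∧
      Refines (P (n + 1)) (Set.image (⇑h.symm) '' P n))
    (m i : ℕ) (Z₂ Z₁ : Set X) (hZ₂ : Z₂ ∈ P (m + 2 * i)) (hZ₁ : Z₁ ∈ P m) :
    (Chain h P (m + 2 * i) Z₂ m Z₁ ↔
      ∃ j : ℤ, |j| ≤ (i : ℤ) ∧ Z₂ ⊆ ⇑(h.toEquiv ^ j) '' Z₁) ∧
    (Chain h P (m + 2 * i) Z₂ m Z₁ ↔
      ∃ j : ℤ, |j| ≤ (i : ℤ) ∧ (Z₂ ∩ ⇑(h.toEquiv ^ j) '' Z₁).Nonempty) :=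
  stmt16_general h P hpart href m i Z₂ Z₁ hZ₂ hZ₁
end

section
/- Let X be compact metrizable totally disconnected, h a homeomorphism, (Pₙ) an h-refined sequence of partitions with ⋂ₙ Zₙ(x) = {x} for all x, and m ∈ ℕ. Then h^m = id_X if and only if the associated h-diagram has global periodicity m: whenever Z ∈ Pₙ (n even), and there is an alternating chain Z = Z₀, Z₁ ⊆ h(Z₀), Z₂ ⊆ Z₁, Z₃ ⊆ h(Z₂), …, Z_{2m−1} ⊆ h(Z_{2m−2}) with Z_j ∈ P_{n+j}, it follows that Z_{2m−1} ⊆ Z₀ (and similarly with h⁻¹ for n odd). -/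
/-- The `h`-diagram has global periodicity `m`: for every alternating chain
`Z₀, Z₁ ⊆ h^{±1}(Z₀), Z₂ ⊆ Z₁, Z₃ ⊆ h^{±1}(Z₂), …, Z_{2m-1} ⊆ h^{±1}(Z_{2m-2})`
with `Z_j ∈ P (n + j)` (using `h` if `n` is even and `h⁻¹` if `n` is odd), we have
`Z_{2m-1} ⊆ Z₀`. -/
def GlobalPeriodicity {X : Type*} [TopologicalSpace X] (h : X ≃ₜ X)
    (P : ℕ → Set (Set X)) (m : ℕ) : Prop :=
  ∀ n : ℕ, ∀ Zc : ℕ → Set X,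
    (∀ j, j ≤ 2 * m - 1 → Zc j ∈ P (n + j)) →
    (∀ j, j < 2 * m - 1 →
      if Even j then
        Zc (j + 1) ⊆ (if Even n then ⇑h '' Zc j else ⇑h.symm '' Zc j)
      else Zc (j + 1) ⊆ Zc j) →
    Zc (2 * m - 1) ⊆ Zc 0

lemma stmt18_aux_forward {X : Type*} (g gi : X → X) (hgi : ∀ y, gi (g y) = y)
    (m : ℕ) (hm : 0 < m) (hid : gi^[m] = id) (Zc : ℕ → Set X)
    (hc : ∀ j, j < 2 * m - 1 →
      if Even j then Zc (j + 1) ⊆ g '' Zc j else Zc (j + 1) ⊆ Zc j) :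
    Zc (2 * m - 1) ⊆ Zc 0 := by
  intro x hx
  have key : ∀ k, k ≤ m → gi^[k] x ∈ Zc (2 * m - 1 - 2 * k) := by
    intro k
    induction k with
    | zero => intro _; simpa using hx
    | succ k ih =>
      intro hk
      have h1 := ih (by omega)
      have hj : 2 * m - 2 - 2 * k < 2 * m - 1 := by omega
      have hje : Even (2 * m - 2 - 2 * k) := by rw [Nat.even_iff]; omega
      have hstep := hc _ hj
      rw [if_pos hje] at hstep
      have heq : 2 * m - 2 - 2 * k + 1 = 2 * m - 1 - 2 * k := by omega
      rw [heq] at hstep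
      obtain ⟨y, hy, hyx⟩ := hstep h1
      have h2 : gi^[k + 1] x ∈ Zc (2 * m - 2 - 2 * k) := by
        have hgy : gi (gi^[k] x) = y := by rw [← hyx, hgi]
        rw [Function.iterate_succ_apply', hgy]
        exact hy
      by_cases hlast : k + 1 = m
      · have he : 2 * m - 1 - 2 * (k + 1) = 2 * m - 2 - 2 * k := by omega
        rw [he]; exact h2
      · have hj2 : 2 * m - 3 - 2 * k < 2 * m - 1 := by omega
        have hjo : ¬ Even (2 * m - 3 - 2 * k) := by rw [Nat.even_iff]; omega
        have hstep2 := hc _ hj2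
        rw [if_neg hjo] at hstep2
        have heq2 : 2 * m - 3 - 2 * k + 1 = 2 * m - 2 - 2 * k := by omega
        rw [heq2] at hstep2
        have he : 2 * m - 1 - 2 * (k + 1) = 2 * m - 3 - 2 * k := by omega
        rw [he]
        exact hstep2 h2
  have hfin := key m le_rfl
  have h0 : 2 * m - 1 - 2 * m = 0 := by omega
  rw [h0, hid] at hfin
  exact hfin

theorem stmt18 {X : Type*} [TopologicalSpace X] [CompactSpace X]
    [TopologicalSpace.MetrizableSpace X] [TotallyDisconnectedSpace X]
    (h : X ≃ₜ X) (P : ℕ → Set (Set X))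
    (hpart : ∀ n, IsClopenPartition (P n))
    (href : ∀ n, Refines (P (n + 1)) (P n) ∧
      Refines (P (n + 1)) (Set.image (⇑h) '' P n) ∧
      Refines (P (n + 1)) (Set.image (⇑h.symm) '' P n))
    (hinter : ∀ x : X, ⋂₀ {W : Set X | ∃ n, W ∈ P n ∧ x ∈ W} = {x})
    (m : ℕ) (hm : 0 < m) :
    (⇑h)^[m] = id ↔ GlobalPeriodicity h P m := by
  have huniq : ∀ {n : ℕ} {W W' : Set X} {x : X}, W ∈ P n → W' ∈ P n →
      x ∈ W → x ∈ W' → W = W' := by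
    intro n W W' x hW hW' hx hx'
    by_contra hne
    exact Set.disjoint_left.mp ((hpart n).2.2.1 hW hW' hne) hx hx'
  have hblock : ∀ (n : ℕ) (x : X), ∃ W, W ∈ P n ∧ x ∈ W := by
    intro n x
    have hx : x ∈ ⋃₀ P n := by rw [(hpart n).2.2.2]; exact Set.mem_univ x
    obtain ⟨W, hW, hxW⟩ := hx
    exact ⟨W, hW, hxW⟩
  choose B hBmem hBx using hblock
  constructor
  · intro hid
    have hid' : (⇑h.symm)^[m] = id := by
      funext y
      have h1 : (⇑h.symm)^[m] ((⇑h)^[m] y) = y :=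
        (Function.LeftInverse.iterate h.symm_apply_apply m) y
      rw [hid] at h1
      simpa using h1
    intro n Zc hmem hchain
    by_cases hn : Even n
    · simp only [if_pos hn] at hchain
      exact stmt18_aux_forward (⇑h) (⇑h.symm) h.symm_apply_apply m hm hid' Zc hchain
    · simp only [if_neg hn] at hchain
      exact stmt18_aux_forward (⇑h.symm) (⇑h) h.apply_symm_apply m hm hid Zc hchain
  · intro hgp
    have key : ∀ n : ℕ, Even n → ∀ W ∈ P n, ∀ x : X, x ∈ W → (⇑h)^[m] x ∈ W := by
      intro n hn W hW x hxW
      set Zc : ℕ → Set X := fun j => B (n + j) ((⇑h)^[(j + 1) / 2] x) with hZc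
      have hmem : ∀ j, j ≤ 2 * m - 1 → Zc j ∈ P (n + j) := fun j _ => hBmem _ _
      have hZmem : ∀ j, (⇑h)^[(j + 1) / 2] x ∈ Zc j := fun j => hBx _ _
      have hchain : ∀ j, j < 2 * m - 1 →
          if Even j then
            Zc (j + 1) ⊆ (if Even n then ⇑h '' Zc j else ⇑h.symm '' Zc j)
          else Zc (j + 1) ⊆ Zc j := by
        intro j _
        by_cases hje : Even j
        · rw [if_pos hje, if_pos hn]
          obtain ⟨t, ht⟩ := hje
          have e1 : (j + 1 + 1) / 2 = t + 1 := by omega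
          have e2 : (j + 1) / 2 = t := by omega
          obtain ⟨V', hV', hsub⟩ := (href (n + j)).2.1 (Zc (j + 1)) (hBmem _ _)
          obtain ⟨V, hV, rfl⟩ := hV'
          have hmem1 : (⇑h)^[t + 1] x ∈ Zc (j + 1) := by
            have := hZmem (j + 1)
            rwa [e1] at this
          obtain ⟨v, hv, hveq⟩ := hsub hmem1
          have hvx : v = (⇑h)^[t] x := by
            apply h.injective
            rw [hveq]
            exact Function.iterate_succ_apply' (⇑h) t x
          have hVZ : V = Zc j := by
            refine huniq hV (hBmem _ _) (hvx ▸ hv) ?_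
            have := hZmem j
            rwa [e2] at this
          rw [← hVZ]
          exact hsub
        · rw [if_neg hje]
          obtain ⟨t, ht⟩ := Nat.not_even_iff_odd.mp hje
          have e1 : (j + 1 + 1) / 2 = t + 1 := by omega
          have e2 : (j + 1) / 2 = t + 1 := by omega
          obtain ⟨V, hV, hsub⟩ := (href (n + j)).1 (Zc (j + 1)) (hBmem _ _)
          have hmem1 : (⇑h)^[t + 1] x ∈ Zc (j + 1) := by
            have := hZmem (j + 1)
            rwa [e1] at this
          have hVZ : V = Zc j := by
            refine huniq hV (hBmem _ _) (hsub hmem1) ?_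
            have := hZmem j
            rwa [e2] at this
          rw [← hVZ]
          exact hsub
      have hfin := hgp n Zc hmem hchain
      have hmx : (⇑h)^[m] x ∈ Zc (2 * m - 1) := by
        have e : (2 * m - 1 + 1) / 2 = m := by omega
        have := hZmem (2 * m - 1)
        rwa [e] at this
      have hZ0 : Zc 0 = B n x := by
        simp only [hZc]
        norm_num
      have hWB : W = B n x := huniq hW (hBmem _ _) hxW (hBx _ _)
      rw [hWB, ← hZ0]
      exact hfin hmx
    funext x
    have hmem : (⇑h)^[m] x ∈ ⋂₀ {W : Set X | ∃ n, W ∈ P n ∧ x ∈ W} := by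
      rintro W ⟨n, hWn, hxW⟩
      by_cases hn : Even n
      · exact key n hn W hWn x hxW
      · obtain ⟨V, hV, hsub⟩ := (href n).1 (B (n + 1) x) (hBmem _ _)
        have hVW : V = W := huniq hV hWn (hsub (hBx _ _)) hxW
        rw [← hVW]
        exact hsub (key (n + 1) (Odd.add_one (Nat.not_even_iff_odd.mp hn)) _ (hBmem _ _) x (hBx _ _))
    rw [hinter x] at hmem
    exact hmem
end

section
/- Let X be compact metrizable totally disconnected, h a homeomorphism, and (Pₙ) an h-refined sequence of partitions with the blocks containing any point intersecting to that point. Then (X,h) is essentially minimal (has a unique minimal set) if and only if there exists a decreasing sequence of blocks Zᵢ ∈ Pᵢ (Z₀ ⊇ Z₁ ⊇ Z₂ ⊇ ⋯) such that for every i there exists nᵢ with: every block Z' ∈ P_{nᵢ} satisfies Z' ⊆ h^j(Zᵢ) for some integer j. Moreover, in that case the unique minimal set is the orbit closure of the unique point in ⋂ᵢ Zᵢ. -/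
def IsMinimalSet {X : Type*} [TopologicalSpace X] (h : X ≃ₜ X) (Z : Set X) : Prop :=
  Z.Nonempty ∧ IsClosed Z ∧ ⇑h '' Z = Z ∧
    ∀ W ⊆ Z, W.Nonempty → IsClosed W → ⇑h '' W = W → W = Z

/-- Property (EM) for a decreasing sequence of blocks `Zseq i ∈ P i`: for each `i`
there is a level `n` all of whose blocks are contained in some `h`-power
translate of `Zseq i`. -/
def PropEM {X : Type*} [TopologicalSpace X] (h : X ≃ₜ X) (P : ℕ → Set (Set X))
    (Zseq : ℕ → Set X) : Prop :=
  (∀ i, Zseq i ∈ P i) ∧ (∀ i, Zseq (i + 1) ⊆ Zseq i) ∧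
    ∀ i, ∃ n : ℕ, ∀ Z' ∈ P n, ∃ j : ℤ, Z' ⊆ ⇑(h.toEquiv ^ j) '' Zseq i

/-!
If `Zᵢ` is a decreasing sequence of blocks with property (EM), shrinking to a point `x`, then
every minimal set `Y` meets every `Zᵢ`: a point of `Y` lies in a block of `P_{nᵢ}`, which sits
inside a translate of `Zᵢ`, and `Y` is invariant. By compactness `Y` contains `x`, hence is the
orbit closure of `x`; Zorn's lemma provides at least one minimal set.

Conversely, if `Y` is the unique minimal set and `x ∈ Y`, then `x` lies in every orbit closure
(each contains a minimal set), so the translates of the block `Zᵢ ∋ x` cover `X`. Finitely many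
of them, with exponents at most `N`, suffice, and `h`-refinement puts every block of `P_{i+N}`
inside one of them.
-/

section

open Set Pointwise

variable {X : Type*}

theorem Refines.trans_image {R Q P : Set (Set X)} {g : X → X} (hRQ : Refines R Q)
    (hQP : Refines Q (image g '' P)) : Refines R (image g '' P) := by
  intro Z hZ
  obtain ⟨W, hW, hZW⟩ := hRQ Z hZ
  obtain ⟨V, hV, hWV⟩ := hQP W hW
  exact ⟨V, hV, hZW.trans hWV⟩

theorem Refines.image_comp {R Q P : Set (Set X)} {f g : X → X}
    (hRQ : Refines R (image f '' Q)) (hQP : Refines Q (image g '' P)) :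
    Refines R (image (f ∘ g) '' P) := by
  rintro Z hZ
  obtain ⟨_, ⟨W, hW, rfl⟩, hZW⟩ := hRQ Z hZ
  obtain ⟨_, ⟨V, hV, rfl⟩, hWV⟩ := hQP W hW
  exact ⟨_, ⟨V, hV, rfl⟩, hZW.trans (by rw [Set.image_comp]; exact image_mono hWV)⟩

variable [TopologicalSpace X]

theorem Homeomorph.coe_toEquiv_zpow (h : X ≃ₜ X) (j : ℤ) : ⇑(h.toEquiv ^ j) = ⇑(h ^ j) := by
  let toPerm : (X ≃ₜ X) →* Equiv.Perm X := ⟨⟨Homeomorph.toEquiv, rfl⟩, fun _ _ => rfl⟩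
  exact congrArg DFunLike.coe (map_zpow toPerm h j).symm

namespace Equiv.Perm

variable {α : Type*}

theorem image_zpow_eq_of_image_eq {e : Perm α} {s : Set α} (hs : ⇑e '' s = s) (j : ℤ) :
    ⇑(e ^ j) '' s = s := by
  have he : e ∈ MulAction.stabilizer (Perm α) s := by
    rwa [MulAction.mem_stabilizer_iff, ← image_smul]
  have hej := (MulAction.stabilizer (Perm α) s).zpow_mem he j
  rwa [MulAction.mem_stabilizer_iff, ← image_smul] at hej

def zpowOrbit (e : Perm α) (x : α) : Set α := {y | ∃ j : ℤ, y = (e ^ j) x}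

theorem mem_zpowOrbit_self (e : Perm α) (x : α) : x ∈ zpowOrbit e x := ⟨0, rfl⟩

theorem image_zpowOrbit (e : Perm α) (x : α) : ⇑e '' zpowOrbit e x = zpowOrbit e x := by
  have hstep : ∀ j : ℤ, e ((e ^ j) x) = (e ^ (1 + j)) x := fun j => by
    rw [zpow_one_add, mul_apply]
  ext y
  constructor
  · rintro ⟨_, ⟨j, rfl⟩, rfl⟩
    exact ⟨1 + j, hstep j⟩
  · rintro ⟨j, rfl⟩
    exact ⟨(e ^ (j - 1)) x, ⟨j - 1, rfl⟩, by rw [hstep, add_sub_cancel]⟩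

theorem zpowOrbit_subset {e : Perm α} {s : Set α} (hs : ⇑e '' s = s) {x : α} (hx : x ∈ s) :
    zpowOrbit e x ⊆ s := by
  rintro _ ⟨j, rfl⟩
  rw [← image_zpow_eq_of_image_eq hs j]
  exact mem_image_of_mem _ hx

theorem exists_mem_zpow_image_of_mem_closure [TopologicalSpace α] {e : Perm α} {U : Set α}
    (hU : IsOpen U) {x z : α} (hxU : x ∈ U) (hx : x ∈ closure (zpowOrbit e z)) :
    ∃ j : ℤ, z ∈ ⇑(e ^ j) '' U := by
  obtain ⟨_, hyU, j, rfl⟩ := mem_closure_iff.1 hx U hU hxU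
  exact ⟨-j, _, hyU, by rw [zpow_neg]; exact (e ^ j).symm_apply_apply z⟩

end Equiv.Perm

open Equiv.Perm

namespace IsClopenPartition

variable {P : Set (Set X)}

theorem exists_mem (hP : IsClopenPartition P) (x : X) : ∃ Z ∈ P, x ∈ Z :=
  mem_sUnion.1 (hP.2.2.2 ▸ mem_univ x)

theorem nonempty_of_mem (hP : IsClopenPartition P) {Z : Set X} (hZ : Z ∈ P) : Z.Nonempty :=
  (hP.2.1 Z hZ).1

theorem isClopen_of_mem (hP : IsClopenPartition P) {Z : Set X} (hZ : Z ∈ P) : IsClopen Z :=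
  (hP.2.1 Z hZ).2

theorem eq_of_mem_of_mem_s19 (hP : IsClopenPartition P) {Z W : Set X} (hZ : Z ∈ P) (hW : W ∈ P)
    {x : X} (hxZ : x ∈ Z) (hxW : x ∈ W) : Z = W :=
  hP.2.2.1.elim hZ hW (not_disjoint_iff.2 ⟨x, hxZ, hxW⟩)

theorem eq_of_mem_image_of_mem_image (hP : IsClopenPartition P) {f : X → X}
    (hf : Function.Injective f) {Z W : Set X} (hZ : Z ∈ P) (hW : W ∈ P) {z : X}
    (hzZ : z ∈ f '' Z) (hzW : z ∈ f '' W) : Z = W := by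
  obtain ⟨x, hxZ, rfl⟩ := hzZ
  obtain ⟨y, hyW, hyx⟩ := hzW
  exact hP.eq_of_mem_of_mem_s19 hZ hW hxZ (hf hyx ▸ hyW)

end IsClopenPartition

theorem iInter_subsingleton_of_mem {P : ℕ → Set (Set X)}
    (hpart : ∀ n, IsClopenPartition (P n))
    (hinter : ∀ x : X, ⋂₀ {W : Set X | ∃ n, W ∈ P n ∧ x ∈ W} = {x})
    {Z : ℕ → Set X} (hZ : ∀ i, Z i ∈ P i) : (⋂ i, Z i).Subsingleton := by
  intro x hx w hw
  rw [mem_iInter] at hx hw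
  have hw' : w ∈ ⋂₀ {W : Set X | ∃ n, W ∈ P n ∧ x ∈ W} := by
    rintro W ⟨n, hWn, hxW⟩
    rw [(hpart n).eq_of_mem_of_mem_s19 hWn (hZ n) hxW (hx n)]
    exact hw n
  rw [hinter x] at hw'
  exact hw'.symm

section Dynamics

variable (h : X ≃ₜ X)

theorem exists_isMinimalSet_subset [CompactSpace X] {S : Set X} (hne : S.Nonempty)
    (hcl : IsClosed S) (hinv : ⇑h '' S = S) : ∃ Y ⊆ S, IsMinimalSet h Y := by
  let 𝒮 : Set (Set X) := {Y | Y.Nonempty ∧ IsClosed Y ∧ ⇑h '' Y = Y}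
  have hchain :
      ∀ c ⊆ 𝒮, IsChain (· ⊆ ·) c → c.Nonempty → ∃ lb ∈ 𝒮, ∀ s ∈ c, lb ⊆ s := by
    intro c hc hchain ⟨Y₀, hY₀⟩
    have : Nonempty c := ⟨⟨Y₀, hY₀⟩⟩
    refine ⟨⋂₀ c, ⟨?_, isClosed_sInter fun Y hY => (hc hY).2.1, ?_⟩,
      fun _ => sInter_subset_of_mem⟩
    · have hdir : DirectedOn (· ⊇ ·) c := fun a ha b hb => (hchain.total ha hb).elim
        (fun hab => ⟨a, ha, subset_rfl, hab⟩) (fun hba => ⟨b, hb, hba, subset_rfl⟩)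
      exact IsCompact.nonempty_sInter_of_directed_nonempty_isCompact_isClosed hdir
        (fun Y hY => (hc hY).1) (fun Y hY => (hc hY).2.1.isCompact) (fun Y hY => (hc hY).2.1)
    · rw [sInter_eq_iInter, image_iInter h.bijective]
      exact iInter_congr fun Y => (hc Y.2).2.2
  obtain ⟨Y, hYS, hYmin⟩ := zorn_superset_nonempty 𝒮 hchain S ⟨hne, hcl, hinv⟩
  obtain ⟨hYne, hYcl, hYinv⟩ := hYmin.prop
  exact ⟨Y, hYS, hYne, hYcl, hYinv, fun W hWY hWne hWcl hWinv =>
    hWY.antisymm (hYmin.2 ⟨hWne, hWcl, hWinv⟩ hWY)⟩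

variable {h}

theorem IsMinimalSet.eq_closure_zpowOrbit {Y : Set X} (hY : IsMinimalSet h Y) {x : X}
    (hx : x ∈ Y) : Y = closure (zpowOrbit h.toEquiv x) :=
  (hY.2.2.2 _ (closure_minimal (zpowOrbit_subset hY.2.2.1 hx) hY.2.1)
    ⟨x, subset_closure (mem_zpowOrbit_self _ x)⟩ isClosed_closure
    (by rw [h.image_closure]; exact congrArg closure (image_zpowOrbit h.toEquiv x))).symm

theorem IsMinimalSet.mem_closure_zpowOrbit_of_existsUnique [CompactSpace X] {Y : Set X}
    (hY : IsMinimalSet h Y) (huniq : ∃! Y, IsMinimalSet h Y) {x : X} (hx : x ∈ Y) (z : X) :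
    x ∈ closure (zpowOrbit h.toEquiv z) := by
  obtain ⟨Y', hY'sub, hY'⟩ := exists_isMinimalSet_subset h
    ⟨z, subset_closure (mem_zpowOrbit_self _ z)⟩ isClosed_closure
    (by rw [h.image_closure]; exact congrArg closure (image_zpowOrbit h.toEquiv z))
  exact hY'sub (huniq.unique hY hY' ▸ hx)

theorem IsMinimalSet.inter_nonempty_of_forall_subset_zpow_image {Y : Set X}
    (hY : IsMinimalSet h Y) {Q : Set (Set X)} (hQ : IsClopenPartition Q) {Z : Set X}
    (hcover : ∀ Z' ∈ Q, ∃ j : ℤ, Z' ⊆ ⇑(h.toEquiv ^ j) '' Z) : (Y ∩ Z).Nonempty := by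
  obtain ⟨y, hy⟩ := hY.1
  obtain ⟨Z', hZ', hyZ'⟩ := hQ.exists_mem y
  obtain ⟨j, hj⟩ := hcover Z' hZ'
  obtain ⟨z, hz, rfl⟩ := hj hyZ'
  rw [← image_zpow_eq_of_image_eq hY.2.2.1 j] at hy
  obtain ⟨z', hz', hzz'⟩ := hy
  exact ⟨z, (h.toEquiv ^ j).injective hzz' ▸ hz', hz⟩

theorem exists_natAbs_le_of_forall_mem_zpow_image [CompactSpace X] {U : Set X} (hU : IsOpen U)
    (hcover : ∀ z, ∃ j : ℤ, z ∈ ⇑(h.toEquiv ^ j) '' U) :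
    ∃ N : ℕ, ∀ z, ∃ j : ℤ, j.natAbs ≤ N ∧ z ∈ ⇑(h.toEquiv ^ j) '' U := by
  have hopen : ∀ j : ℤ, IsOpen (⇑(h.toEquiv ^ j) '' U) := fun j => by
    rw [h.coe_toEquiv_zpow]; exact (h ^ j).isOpenMap U hU
  obtain ⟨t, ht⟩ := isCompact_univ.elim_finite_subcover _ hopen
    fun z _ => mem_iUnion.2 (hcover z)
  refine ⟨t.sup Int.natAbs, fun z => ?_⟩
  obtain ⟨j, hj, hz⟩ := mem_iUnion₂.1 (ht (mem_univ z))
  exact ⟨j, Finset.le_sup hj, hz⟩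

end Dynamics

def IsHRefined (h : X ≃ₜ X) (P : ℕ → Set (Set X)) : Prop :=
  ∀ n, Refines (P (n + 1)) (P n) ∧ Refines (P (n + 1)) (Set.image (⇑h) '' P n) ∧
    Refines (P (n + 1)) (Set.image (⇑h.symm) '' P n)

section Partitions

variable {h : X ≃ₜ X} {P : ℕ → Set (Set X)}

theorem IsHRefined.refines_image_zpow (href : IsHRefined h P) (m : ℕ) {k : ℕ} {j : ℤ}
    (hj : j.natAbs ≤ k) : Refines (P (m + k)) (image ⇑(h.toEquiv ^ j) '' P m) := by
  induction k generalizing j with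
  | zero =>
    obtain rfl : j = 0 := Int.natAbs_eq_zero.1 (Nat.le_zero.1 hj)
    exact fun Z hZ => ⟨Z, ⟨Z, hZ, image_id Z⟩, subset_rfl⟩
  | succ k ih =>
    rw [← add_assoc]
    rcases (show j.natAbs ≤ k ∨ j = 1 + k ∨ j = -1 + -k by omega) with hj | rfl | rfl
    · exact (href _).1.trans_image (ih hj)
    · have := (href (m + k)).2.1.image_comp (ih (j := k) (by simp))
      rwa [zpow_one_add, coe_mul]
    · have := (href (m + k)).2.2.image_comp (ih (j := -k) (by simp))
      rwa [zpow_add, zpow_neg_one, coe_mul]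

theorem exists_level_subset_zpow_image [CompactSpace X] (hpart : ∀ n, IsClopenPartition (P n))
    (href : IsHRefined h P) {i : ℕ} {U : Set X} (hU : U ∈ P i)
    (hcover : ∀ z, ∃ j : ℤ, z ∈ ⇑(h.toEquiv ^ j) '' U) :
    ∃ n, ∀ Z' ∈ P n, ∃ j : ℤ, Z' ⊆ ⇑(h.toEquiv ^ j) '' U := by
  obtain ⟨N, hN⟩ :=
    exists_natAbs_le_of_forall_mem_zpow_image ((hpart i).isClopen_of_mem hU).isOpen hcover
  refine ⟨i + N, fun Z' hZ' => ?_⟩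
  obtain ⟨z, hz⟩ := (hpart _).nonempty_of_mem hZ'
  obtain ⟨j, hjN, hzU⟩ := hN z
  obtain ⟨_, ⟨W, hW, rfl⟩, hZ'W⟩ := href.refines_image_zpow i hjN Z' hZ'
  have hWU : W = U :=
    (hpart i).eq_of_mem_image_of_mem_image (h.toEquiv ^ j).injective hW hU (hZ'W hz) hzU
  exact ⟨j, hWU ▸ hZ'W⟩

theorem exists_propEM_of_existsUnique_isMinimalSet [CompactSpace X]
    (hpart : ∀ n, IsClopenPartition (P n)) (href : IsHRefined h P)
    (huniq : ∃! Y, IsMinimalSet h Y) : ∃ Z, PropEM h P Z := by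
  obtain ⟨Y, hY⟩ := huniq.exists
  obtain ⟨x, hxY⟩ := hY.1
  choose Z hZP hxZ using fun n => (hpart n).exists_mem x
  refine ⟨Z, hZP, fun i => ?_, fun i => exists_level_subset_zpow_image hpart href (hZP i)
    fun z => ?_⟩
  · obtain ⟨W, hW, hZW⟩ := (href i).1 _ (hZP (i + 1))
    rwa [(hpart i).eq_of_mem_of_mem_s19 hW (hZP i) (hZW (hxZ _)) (hxZ i)] at hZW
  · exact exists_mem_zpow_image_of_mem_closure ((hpart i).isClopen_of_mem (hZP i)).isOpen
      (hxZ i) (hY.mem_closure_zpowOrbit_of_existsUnique huniq hxY z)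

variable [CompactSpace X] {Z : ℕ → Set X}

theorem PropEM.mem_of_isMinimalSet (hpart : ∀ n, IsClopenPartition (P n))
    (hinter : ∀ x : X, ⋂₀ {W : Set X | ∃ n, W ∈ P n ∧ x ∈ W} = {x}) (hEM : PropEM h P Z)
    {x : X} (hx : x ∈ ⋂ i, Z i) {Y : Set X} (hY : IsMinimalSet h Y) : x ∈ Y := by
  obtain ⟨hZP, hZanti, hcover⟩ := hEM
  have hmeet : ∀ i, (Y ∩ Z i).Nonempty := fun i => by
    obtain ⟨n, hn⟩ := hcover i
    exact hY.inter_nonempty_of_forall_subset_zpow_image (hpart n) hn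
  have hclosed : ∀ i, IsClosed (Y ∩ Z i) := fun i =>
    hY.2.1.inter ((hpart i).isClopen_of_mem (hZP i)).isClosed
  obtain ⟨w, hw⟩ := IsCompact.nonempty_iInter_of_sequence_nonempty_isCompact_isClosed _
    (fun i => inter_subset_inter_right Y (hZanti i)) hmeet (hclosed 0).isCompact hclosed
  rw [mem_iInter] at hw
  obtain rfl : w = x :=
    iInter_subsingleton_of_mem hpart hinter hZP (mem_iInter.2 fun i => (hw i).2) hx
  exact (hw 0).1

theorem PropEM.eq_closure_zpowOrbit (hpart : ∀ n, IsClopenPartition (P n))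
    (hinter : ∀ x : X, ⋂₀ {W : Set X | ∃ n, W ∈ P n ∧ x ∈ W} = {x}) (hEM : PropEM h P Z)
    {x : X} (hx : x ∈ ⋂ i, Z i) {Y : Set X} (hY : IsMinimalSet h Y) :
    Y = closure (zpowOrbit h.toEquiv x) :=
  hY.eq_closure_zpowOrbit (hEM.mem_of_isMinimalSet hpart hinter hx hY)

theorem PropEM.existsUnique_isMinimalSet (hpart : ∀ n, IsClopenPartition (P n))
    (hinter : ∀ x : X, ⋂₀ {W : Set X | ∃ n, W ∈ P n ∧ x ∈ W} = {x}) (hEM : PropEM h P Z) :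
    ∃! Y, IsMinimalSet h Y := by
  have hclosed : ∀ i, IsClosed (Z i) := fun i => ((hpart i).isClopen_of_mem (hEM.1 i)).isClosed
  obtain ⟨x, hx⟩ := IsCompact.nonempty_iInter_of_sequence_nonempty_isCompact_isClosed Z hEM.2.1
    (fun i => (hpart i).nonempty_of_mem (hEM.1 i)) (hclosed 0).isCompact hclosed
  obtain ⟨Y, -, hY⟩ := exists_isMinimalSet_subset h ⟨x, mem_univ x⟩ isClosed_univ
    (image_univ_of_surjective h.surjective)
  exact ⟨Y, hY, fun Y' hY' => (hEM.eq_closure_zpowOrbit hpart hinter hx hY').trans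
    (hEM.eq_closure_zpowOrbit hpart hinter hx hY).symm⟩

end Partitions

end

theorem stmt19_general {X : Type*} [TopologicalSpace X] [CompactSpace X]
    (h : X ≃ₜ X) (P : ℕ → Set (Set X))
    (hpart : ∀ n, IsClopenPartition (P n))
    (href : ∀ n, Refines (P (n + 1)) (P n) ∧
      Refines (P (n + 1)) (Set.image (⇑h) '' P n) ∧
      Refines (P (n + 1)) (Set.image (⇑h.symm) '' P n))
    (hinter : ∀ x : X, ⋂₀ {W : Set X | ∃ n, W ∈ P n ∧ x ∈ W} = {x}) :
    ((∃! Y : Set X, IsMinimalSet h Y) ↔ ∃ Zseq : ℕ → Set X, PropEM h P Zseq) ∧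
    ∀ Zseq : ℕ → Set X, PropEM h P Zseq → ∀ x : X, x ∈ ⋂ i, Zseq i →
      ∀ Y : Set X, IsMinimalSet h Y →
        Y = closure {y : X | ∃ j : ℤ, y = (h.toEquiv ^ j) x} :=
  ⟨⟨exists_propEM_of_existsUnique_isMinimalSet hpart href,
    fun ⟨_, hEM⟩ => hEM.existsUnique_isMinimalSet hpart hinter⟩,
    fun _ hEM _ hx _ hY => hEM.eq_closure_zpowOrbit hpart hinter hx hY⟩

theorem stmt19 {X : Type*} [TopologicalSpace X] [CompactSpace X]
    [TopologicalSpace.MetrizableSpace X] [TotallyDisconnectedSpace X]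
    (h : X ≃ₜ X) (P : ℕ → Set (Set X))
    (hpart : ∀ n, IsClopenPartition (P n))
    (href : ∀ n, Refines (P (n + 1)) (P n) ∧
      Refines (P (n + 1)) (Set.image (⇑h) '' P n) ∧
      Refines (P (n + 1)) (Set.image (⇑h.symm) '' P n))
    (hinter : ∀ x : X, ⋂₀ {W : Set X | ∃ n, W ∈ P n ∧ x ∈ W} = {x}) :
    ((∃! Y : Set X, IsMinimalSet h Y) ↔ ∃ Zseq : ℕ → Set X, PropEM h P Zseq) ∧
    ∀ Zseq : ℕ → Set X, PropEM h P Zseq → ∀ x : X, x ∈ ⋂ i, Zseq i →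
      ∀ Y : Set X, IsMinimalSet h Y →
        Y = closure {y : X | ∃ j : ℤ, y = (h.toEquiv ^ j) x} :=
  stmt19_general h P hpart href hinter
end
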